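/- arXiv:1901.04152 — 5 statements merged into one kernel-verified Lean document; each statement's English description precedes it below -/
import Mathlib

section
/- Let n ≥ 1, let A ⊆ ℂ^n be any set, and define ρ : ℂ^n → ℝ by ρ(z) = ‖z₁‖ (the absolute value of the first coordinate). Then ∫⁻_{r ∈ ℝ} μH^1 (A ∩ ρ⁻¹{r}) dr ≤ μH^2(A), where the integral is the lower Lebesgue integral over r ∈ ℝ with respect to Lebesgue measure, and μH^1, μH^2 denote Hausdorff measures on ℂ^n with its standard (Euclidean) metric. -/
/-!
Cover `s` by sets `t m` of small diameter with `∑ ediam (t m) ^ (d + 1)` close to `μH[d + 1] s`.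
For each level `r`, the sets `t m` whose image under `f` reaches `r` cover the slice
`s ∩ f ⁻¹' {r}`, so as the covers get finer, `μH[d]` of the slice is bounded by the limit
inferior of `∑_{m : r ∈ f '' t m} ediam (t m) ^ d`. Integrating in `r`, each `t m` contributes
`ediam (t m) ^ d * volume (f '' t m) ≤ ediam (t m) ^ (d + 1)` because `f` is `1`-Lipschitz,
and Fatou's lemma carries the bound through the limit.
-/

open MeasureTheory Measure Metric Set Filter
open scoped ENNReal NNReal Topology

theorem LipschitzWith.volume_closure_image_le {X : Type*} [PseudoEMetricSpace X] {K : ℝ≥0}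
    {f : X → ℝ} (hf : LipschitzWith K f) (s : Set X) :
    volume (closure (f '' s)) ≤ K * ediam s :=
  calc volume (closure (f '' s)) ≤ ediam (closure (f '' s)) := Real.volume_le_diam _
    _ = ediam (f '' s) := ediam_closure _
    _ ≤ K * ediam s := hf.ediam_image_le s

theorem EuclideanSpace.lipschitzWith_norm_apply {𝕜 ι : Type*} [RCLike 𝕜] [Fintype ι] (i : ι) :
    LipschitzWith 1 (fun z : EuclideanSpace 𝕜 ι => ‖z i‖) := by
  have h := lipschitzWith_one_norm.comp ((LipschitzWith.eval (α := fun _ => 𝕜) i).comp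
    (PiLp.lipschitzWith_ofLp 2 _))
  rwa [mul_one, mul_one] at h

namespace MeasureTheory

variable {X : Type*} [EMetricSpace X]

/-- Taking closures makes each summand a Borel function of `r`. -/
noncomputable def sliceWeight (f : X → ℝ) (d : ℝ) (t : ℕ → Set X) (r : ℝ) : ℝ≥0∞ :=
  ∑' m, (closure (f '' t m)).indicator (fun _ => ediam (t m) ^ d) r

theorem measurable_sliceWeight (f : X → ℝ) (d : ℝ) (t : ℕ → Set X) :
    Measurable (sliceWeight f d t) :=
  .tsum fun _ => measurable_const.indicator isClosed_closure.measurableSet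

theorem lintegral_sliceWeight_le {K : ℝ≥0} {f : X → ℝ} (hf : LipschitzWith K f) {d : ℝ}
    (hd : 0 ≤ d) (t : ℕ → Set X) :
    ∫⁻ r, sliceWeight f d t r ≤ K * ∑' m, ⨆ _ : (t m).Nonempty, ediam (t m) ^ (d + 1) := by
  unfold sliceWeight
  rw [lintegral_tsum fun _ =>
    (measurable_const.indicator isClosed_closure.measurableSet).aemeasurable,
    ← ENNReal.tsum_mul_left]
  refine ENNReal.tsum_le_tsum fun m => ?_
  rw [lintegral_indicator_const isClosed_closure.measurableSet]
  rcases (t m).eq_empty_or_nonempty with hempty | hne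
  · simp [hempty]
  · calc ediam (t m) ^ d * volume (closure (f '' t m)) ≤ ediam (t m) ^ d * (K * ediam (t m)) :=
          mul_le_mul_right (hf.volume_closure_image_le _) _
      _ = K * ⨆ _ : (t m).Nonempty, ediam (t m) ^ (d + 1) := by
          rw [iSup_pos hne, ENNReal.rpow_add_of_nonneg _ _ hd zero_le_one, ENNReal.rpow_one]
          ring

variable [MeasurableSpace X] [BorelSpace X]

theorem hausdorffMeasure_inter_preimage_le_liminf_sliceWeight (f : X → ℝ) (d : ℝ) {s : Set X}
    {δ : ℕ → ℝ≥0∞} (hδ : Tendsto δ atTop (𝓝 0)) {t : ℕ → ℕ → Set X}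
    (hst : ∀ k, s ⊆ ⋃ m, t k m) (ht : ∀ k m, ediam (t k m) ≤ δ k) (r : ℝ) :
    μH[d] (s ∩ f ⁻¹' {r}) ≤ liminf (fun k => sliceWeight f d (t k) r) atTop := by
  let hits (k : ℕ) : Set ℕ := {m | r ∈ closure (f '' t k m)}
  have hcover : ∀ k, s ∩ f ⁻¹' {r} ⊆ ⋃ m : hits k, t k m := fun k x ⟨hxs, hxr⟩ => by
    obtain ⟨m, hm⟩ := mem_iUnion.1 (hst k hxs)
    exact mem_iUnion.2 ⟨⟨m, subset_closure ⟨x, hm, hxr⟩⟩, hm⟩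
  refine (hausdorffMeasure_le_liminf_tsum d _ δ hδ (fun k (m : hits k) => t k m)
    (.of_forall fun k m => ht k m) (.of_forall hcover)).trans_eq ?_
  congr with k
  exact tsum_subtype (hits k) fun m => ediam (t k m) ^ d

theorem lintegral_hausdorffMeasure_inter_preimage_le_of_covers {K : ℝ≥0} {f : X → ℝ}
    (hf : LipschitzWith K f) {d : ℝ} (hd : 0 ≤ d) {s : Set X} {δ : ℕ → ℝ≥0∞}
    (hδ : Tendsto δ atTop (𝓝 0)) {t : ℕ → ℕ → Set X} (hst : ∀ k, s ⊆ ⋃ m, t k m)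
    (ht : ∀ k m, ediam (t k m) ≤ δ k) {c : ℝ≥0∞}
    (hc : ∀ k, ∑' m, ⨆ _ : (t k m).Nonempty, ediam (t k m) ^ (d + 1) ≤ c) :
    ∫⁻ r, μH[d] (s ∩ f ⁻¹' {r}) ≤ K * c :=
  calc ∫⁻ r, μH[d] (s ∩ f ⁻¹' {r})
      ≤ ∫⁻ r, liminf (fun k => sliceWeight f d (t k) r) atTop :=
        lintegral_mono (hausdorffMeasure_inter_preimage_le_liminf_sliceWeight f d hδ hst ht)
    _ ≤ liminf (fun k => ∫⁻ r, sliceWeight f d (t k) r) atTop :=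
        lintegral_liminf_le fun k => measurable_sliceWeight f d (t k)
    _ ≤ K * c :=
        liminf_le_of_frequently_le (.of_forall fun k =>
          (lintegral_sliceWeight_le hf hd (t k)).trans (by gcongr; exact hc k))

theorem exists_cover_tsum_lt_of_hausdorffMeasure_lt {d : ℝ} {s : Set X} {c : ℝ≥0∞}
    (hc : μH[d] s < c) {δ : ℝ≥0∞} (hδ : 0 < δ) :
    ∃ t : ℕ → Set X, s ⊆ ⋃ m, t m ∧ (∀ m, ediam (t m) ≤ δ) ∧
      ∑' m, ⨆ _ : (t m).Nonempty, ediam (t m) ^ d < c := by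
  rw [hausdorffMeasure_apply] at hc
  simpa only [iInf_lt_iff, exists_prop] using
    (le_iSup₂ (f := fun δ (_ : 0 < δ) => _) δ hδ).trans_lt hc

/-- Eilenberg's inequality for a `1`-Lipschitz function. -/
theorem lintegral_hausdorffMeasure_inter_preimage_le {f : X → ℝ} (hf : LipschitzWith 1 f)
    {d : ℝ} (hd : 0 ≤ d) (s : Set X) :
    ∫⁻ r, μH[d] (s ∩ f ⁻¹' {r}) ≤ μH[d + 1] s := by
  refine le_of_forall_gt_imp_ge_of_dense fun c hc => ?_
  choose t hst ht hsum using fun k : ℕ =>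
    exists_cover_tsum_lt_of_hausdorffMeasure_lt hc (ENNReal.inv_pos.2 (ENNReal.natCast_ne_top k))
  simpa using lintegral_hausdorffMeasure_inter_preimage_le_of_covers hf hd
    ENNReal.tendsto_inv_nat_nhds_zero hst ht fun k => (hsum k).le

end MeasureTheory

/-- Slicing inequality derived from the Eilenberg inequality: slices of a set
`A ⊆ ℂⁿ` by level sets of `ρ(z) = ‖z₁‖` satisfy
`∫⁻ μH¹(A ∩ ρ⁻¹{r}) dr ≤ μH²(A)`. -/
theorem slice_measure_bound (n : ℕ) (hn : 0 < n)
    [MeasurableSpace (EuclideanSpace ℂ (Fin n))]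
    [BorelSpace (EuclideanSpace ℂ (Fin n))]
    (A : Set (EuclideanSpace ℂ (Fin n))) :
    ∫⁻ r : ℝ, μH[1] (A ∩ (fun z : EuclideanSpace ℂ (Fin n) => ‖z ⟨0, hn⟩‖) ⁻¹' {r})
      ≤ μH[2] A := by
  simpa [one_add_one_eq_two] using lintegral_hausdorffMeasure_inter_preimage_le
    (EuclideanSpace.lipschitzWith_norm_apply ⟨0, hn⟩) zero_le_one A
end

section
/- Let n ≥ 1 and let K ⊆ ℂ^n be a set with μH^1(K) < ∞. Let π : ℂ^n → ℂ be the projection to the first coordinate, π(z) = z₁. If μH^1(π(K)) > 0, then there exist a positive integer s and a subset Q ⊆ π(K) with μH^1(Q) > 0 such that for every y ∈ Q the fiber K ∩ π⁻¹{y} is finite and has exactly s elements. -/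
/-!
Eilenberg's inequality in the weak form needed here: if `f` is `C`-Lipschitz and the fiber of `f`
over every point of `A` contains `m` points of `K`, then `m μH^d(A) ≤ C^d μH^d(K)`. Cut the
space into countably many Borel cells of diameter `≤ δ`; a point whose fiber holds `m` points
that are `δ`-separated lies in the images of `m` distinct cells, so integrating the number of
those images gives `m μH^d(A) ≤ ∑ μH^d(f(K ∩ cell)) ≤ C^d μH^d(K)`; then let `δ → 0`.
Hence when `μH^1(K) < ∞` the points of `π(K)` with infinite fiber form a null set, and the rest
of `π(K)` is the countable union of the sets where the fiber has exactly `s` points, so one of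
them has positive measure, necessarily with `s > 0`.
-/

open MeasureTheory Set Function Filter Topology
open scoped ENNReal NNReal

theorem tsum_measure_inter_eq_of_partition {α ι : Type*} [Countable ι] [MeasurableSpace α]
    (μ : Measure α) {c : ι → Set α} (hc : ∀ i, MeasurableSet (c i))
    (hd : Pairwise (Disjoint on c)) (hcov : ⋃ i, c i = univ) (s : Set α) :
    ∑' i, μ (s ∩ c i) = μ s := by
  calc ∑' i, μ (s ∩ c i) = Measure.sum (fun i => μ.restrict (c i)) s := by
        simp only [Measure.sum_apply_of_countable, Measure.restrict_apply' (hc _)]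
    _ = μ s := by rw [← Measure.restrict_iUnion hd hc, hcov, Measure.restrict_univ]

theorem nat_mul_measure_le_tsum_of_le_encard {Y ι : Type*} [Countable ι] [MeasurableSpace Y]
    (μ : Measure Y) (V : ι → Set Y) {A : Set Y} {m : ℕ}
    (hA : ∀ y ∈ A, (m : ℕ∞) ≤ {i | y ∈ V i}.encard) :
    m * μ A ≤ ∑' i, μ (V i) := by
  set W := fun i => toMeasurable μ (V i)
  have hW : ∀ i, Measurable ((W i).indicator (1 : Y → ℝ≥0∞)) := fun i =>
    measurable_const.indicator (measurableSet_toMeasurable _ _)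
  have hAg : A ⊆ {y | (m : ℝ≥0∞) ≤ ∑' i, (W i).indicator 1 y} := by
    intro y hy
    calc (m : ℝ≥0∞) ≤ {i | y ∈ V i}.encard := by exact_mod_cast hA y hy
      _ = ∑' i, {i | y ∈ V i}.indicator 1 i := by
        rw [← ENNReal.tsum_set_one]; exact tsum_subtype {i | y ∈ V i} (1 : ι → ℝ≥0∞)
      _ ≤ ∑' i, (W i).indicator 1 y := ENNReal.tsum_le_tsum fun i => by
        by_cases h : y ∈ V i
        · simp [h, indicator_of_mem (show y ∈ W i from subset_toMeasurable μ (V i) h)]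
        · simp [h]
  calc (m : ℝ≥0∞) * μ A
      ≤ m * μ {y | (m : ℝ≥0∞) ≤ ∑' i, (W i).indicator 1 y} := by gcongr
    _ ≤ ∫⁻ y, ∑' i, (W i).indicator 1 y ∂μ :=
      mul_meas_ge_le_lintegral₀ (Measurable.tsum hW).aemeasurable _
    _ = ∑' i, μ (V i) := by
      rw [lintegral_tsum fun i => (hW i).aemeasurable]
      simp only [lintegral_indicator_one (measurableSet_toMeasurable _ _), W, measure_toMeasurable]

theorem Set.Finite.eventually_pairwise_lt_dist {X ι : Type*} [MetricSpace X] {t : Set X}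
    (ht : t.Finite) {l : Filter ι} {u : ι → ℝ} (hu : Tendsto u l (𝓝 0)) :
    ∀ᶠ k in l, t.Pairwise (u k < dist · ·) := by
  refine (eventually_all_finite ht).2 fun a _ => (eventually_all_finite ht).2 fun b _ => ?_
  by_cases hab : a = b
  · simp [hab]
  · filter_upwards [hu.eventually (gt_mem_nhds (dist_pos.2 hab))] with k hk _ using hk

section Eilenberg

variable {X Y : Type*} [MetricSpace X]

def fiberSeparatedLocus (f : X → Y) (K : Set X) (m : ℕ) (δ : ℝ) : Set Y :=
  {y | ∃ t ⊆ K ∩ f ⁻¹' {y}, t.encard = m ∧ t.Pairwise (δ < dist · ·)}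

theorem fiberSeparatedLocus_antitone (f : X → Y) (K : Set X) (m : ℕ) :
    Antitone (fiberSeparatedLocus f K m) := fun _ _ hδ _ ⟨t, htK, htm, hsep⟩ =>
  ⟨t, htK, htm, hsep.mono' fun _ _ h => hδ.trans_lt h⟩

variable [MeasurableSpace X] [BorelSpace X] [TopologicalSpace.SeparableSpace X]
  [EMetricSpace Y] [MeasurableSpace Y] [BorelSpace Y] {f : X → Y} {C : ℝ≥0} {d : ℝ}

theorem nat_mul_hausdorffMeasure_fiberSeparatedLocus_le (hf : LipschitzWith C f) (hd : 0 ≤ d)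
    (K : Set X) (m : ℕ) {δ : ℝ} (hδ : 0 < δ) :
    m * μH[d] (fiberSeparatedLocus f K m δ) ≤ C ^ d * μH[d] K := by
  obtain ⟨c, hc, hbdd, hdiam, hcov, hdisj⟩ :=
    SeparableSpace.exists_measurable_partition_diam_le X hδ
  choose idx hidx using fun x => mem_iUnion.1 (hcov.symm ▸ mem_univ x : x ∈ ⋃ i, c i)
  have hcount : ∀ y ∈ fiberSeparatedLocus f K m δ,
      (m : ℕ∞) ≤ {i | y ∈ f '' (K ∩ c i)}.encard := by
    rintro y ⟨t, htK, htm, hsep⟩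
    have hinj : InjOn idx t := fun a ha b hb hab => by_contra fun hne =>
      (hsep ha hb hne).not_ge <| (Metric.dist_le_diam_of_mem (hbdd _) (hidx a)
        (hab ▸ hidx b)).trans (hdiam _)
    calc (m : ℕ∞) = (idx '' t).encard := by rw [hinj.encard_image, htm]
      _ ≤ _ := encard_le_encard <| by
        rintro _ ⟨a, ha, rfl⟩
        exact ⟨a, ⟨(htK ha).1, hidx a⟩, (htK ha).2⟩
  calc (m : ℝ≥0∞) * μH[d] (fiberSeparatedLocus f K m δ)
      ≤ ∑' i, μH[d] (f '' (K ∩ c i)) := nat_mul_measure_le_tsum_of_le_encard _ _ hcount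
    _ ≤ ∑' i, C ^ d * μH[d] (K ∩ c i) :=
      ENNReal.tsum_le_tsum fun i => hf.hausdorffMeasure_image_le hd _
    _ = C ^ d * μH[d] K := by
      rw [ENNReal.tsum_mul_left, tsum_measure_inter_eq_of_partition _ hc hdisj hcov]

theorem nat_mul_hausdorffMeasure_setOf_le_encard_fiber_le (hf : LipschitzWith C f) (hd : 0 ≤ d)
    (K : Set X) (m : ℕ) :
    m * μH[d] {y | (m : ℕ∞) ≤ (K ∩ f ⁻¹' {y}).encard} ≤ C ^ d * μH[d] K := by
  set S : ℕ → Set Y := fun k => fiberSeparatedLocus f K m (1 / (k + 1))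
  have hmono : Monotone S := fun k l hkl =>
    fiberSeparatedLocus_antitone f K m (Nat.one_div_le_one_div hkl)
  have hcover : {y | (m : ℕ∞) ≤ (K ∩ f ⁻¹' {y}).encard} ⊆ ⋃ k, S k := by
    intro y hy
    obtain ⟨t, htK, htm⟩ := exists_subset_encard_eq hy
    obtain ⟨k, hk⟩ := ((finite_of_encard_eq_coe htm).eventually_pairwise_lt_dist
      tendsto_one_div_add_atTop_nhds_zero_nat).exists
    exact mem_iUnion.2 ⟨k, t, htK, htm, hk⟩
  calc (m : ℝ≥0∞) * μH[d] {y | (m : ℕ∞) ≤ (K ∩ f ⁻¹' {y}).encard}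
      ≤ m * ⨆ k, μH[d] (S k) := by
        rw [← hmono.measure_iUnion]; gcongr
    _ = ⨆ k, m * μH[d] (S k) := ENNReal.mul_iSup _ _
    _ ≤ C ^ d * μH[d] K := iSup_le fun k =>
      nat_mul_hausdorffMeasure_fiberSeparatedLocus_le hf hd K m Nat.one_div_pos_of_nat

theorem hausdorffMeasure_setOf_infinite_fiber_eq_zero (hf : LipschitzWith C f) (hd : 0 ≤ d)
    {K : Set X} (hK : μH[d] K ≠ ∞) : μH[d] {y | (K ∩ f ⁻¹' {y}).Infinite} = 0 := by
  have hbound : ∀ m : ℕ, m * μH[d] {y | (K ∩ f ⁻¹' {y}).Infinite} ≤ C ^ d * μH[d] K :=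
    fun m => le_trans (by gcongr; exact fun hy => by simp [hy.encard_eq])
      (nat_mul_hausdorffMeasure_setOf_le_encard_fiber_le hf hd K m)
  have hfin : (C : ℝ≥0∞) ^ d * μH[d] K ≠ ∞ :=
    ENNReal.mul_ne_top (ENNReal.rpow_ne_top_of_nonneg hd ENNReal.coe_ne_top) hK
  by_contra hE
  obtain ⟨m, hm⟩ := ENNReal.exists_nat_gt (ENNReal.div_lt_top hfin hE).ne
  exact (hbound m).not_gt ((ENNReal.div_lt_iff (Or.inl hE) (Or.inr hfin)).1 hm)

end Eilenberg

/-- If `K ⊆ ℂⁿ` has finite `H¹` measure and its projection to the first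
coordinate has positive `H¹` measure, then some fiber cardinality `s` is
attained over a set of positive linear measure. -/
theorem fiber_cardinality_positive_measure (n : ℕ) (hn : 0 < n)
    [MeasurableSpace (EuclideanSpace ℂ (Fin n))]
    [BorelSpace (EuclideanSpace ℂ (Fin n))]
    (K : Set (EuclideanSpace ℂ (Fin n))) (hK : μH[1] K < ∞)
    (π : EuclideanSpace ℂ (Fin n) → ℂ) (hπ : ∀ z, π z = z ⟨0, hn⟩)
    (hpos : 0 < μH[1] (π '' K)) :
    ∃ s : ℕ, 0 < s ∧ ∃ Q ⊆ π '' K, 0 < μH[1] Q ∧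
      ∀ y ∈ Q, (K ∩ π ⁻¹' {y}).Finite ∧ (K ∩ π ⁻¹' {y}).ncard = s := by
  have hlip : LipschitzWith 1 π := LipschitzWith.of_edist_le fun a b => by
    simpa only [hπ] using PiLp.edist_apply_le a b ⟨0, hn⟩
  have hE := hausdorffMeasure_setOf_infinite_fiber_eq_zero hlip zero_le_one hK.ne
  set Q : ℕ → Set ℂ := fun s =>
    {y ∈ π '' K | (K ∩ π ⁻¹' {y}).Finite ∧ (K ∩ π ⁻¹' {y}).ncard = s}
  have hcover : π '' K ⊆ {y | (K ∩ π ⁻¹' {y}).Infinite} ∪ ⋃ s, Q s := fun y hy => by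
    by_cases hfin : (K ∩ π ⁻¹' {y}).Finite
    · exact Or.inr (mem_iUnion.2 ⟨_, hy, hfin, rfl⟩)
    · exact Or.inl hfin
  obtain ⟨s, hs⟩ : ∃ s, μH[1] (Q s) ≠ 0 := by
    by_contra! h
    exact hpos.ne' (measure_mono_null hcover (measure_union_null hE (measure_iUnion_null h)))
  obtain ⟨_, ⟨x, hxK, hxy⟩, hfin, hcard⟩ := nonempty_of_measure_ne_zero hs
  have hspos : 0 < s := hcard ▸ (ncard_pos hfin).2 ⟨x, hxK, hxy⟩
  exact ⟨s, hspos, Q s, fun y hy => hy.1, pos_iff_ne_zero.2 hs, fun y hy => hy.2⟩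
end

section
/- Let n ≥ 1, and for each j ∈ ℕ let γ_j : ℝ → ℂ^n be continuously differentiable on (0,1) and let θ_j : ℝ → ℝ be measurable on (0,1). Assume there exists R > 0 such that ‖(γ_j(t))₁‖ < R for all j and all t ∈ (0,1) (where (·)₁ denotes the first complex coordinate), and assume the total mass-type sum ∑_{j} ∫⁻_{(0,1)} |θ_j(t)| · ‖deriv (t ↦ (γ_j(t))₁) t‖ dt is finite. Then for Lebesgue-almost every α ∈ ℂ, the sum ∑_{j} ∫⁻_{(0,1)} |θ_j(t)| · ‖deriv (t ↦ (γ_j(t))₁) t‖ / ‖(γ_j(t))₁ − α‖ dt is finite. -/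
open MeasureTheory Set
open scoped ENNReal

/-!
Each summand is controlled by Tonelli: integrating over `α` in a ball of radius `r` first, the
kernel `α ↦ ‖z - α‖⁻¹` has integral over that ball bounded uniformly in `‖z‖ ≤ R`, by its
integral over the ball of radius `R + r` about `0`, which is finite because `‖x‖⁻¹` is locally
integrable in real dimension `2`. Hence the sum of the Cauchy transforms has finite integral over
every ball, so it is finite almost everywhere.
-/

open Metric

namespace MeasureTheory

variable {E : Type*} [NormedAddCommGroup E] [NormedSpace ℝ E] [FiniteDimensional ℝ E]
  [MeasurableSpace E] [BorelSpace E] {ν : Measure E} [ν.IsAddHaarMeasure]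

theorem lintegral_closedBall_inv_enorm_lt_top (hE : 2 ≤ Module.finrank ℝ E) (r : ℝ) :
    ∫⁻ x in closedBall 0 r, ‖x‖ₑ⁻¹ ∂ν < ∞ := by
  have : Nontrivial E := Module.nontrivial_of_finrank_pos (R := ℝ) (by omega)
  have hint : IntegrableOn (fun x : E => ‖x‖⁻¹) (closedBall 0 r) ν :=
    (locallyIntegrable_of_norm_le_rpow (μ := ν) (C := 1) (α := 1) (by omega)
      (by exact_mod_cast hE) (.of_forall fun x => by simp [Real.rpow_neg_one])
      (by fun_prop)).integrableOn_isCompact (isCompact_closedBall 0 r)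
  refine lt_of_eq_of_lt (lintegral_congr_ae ?_) hint.2
  filter_upwards [ae_restrict_of_ae (ν.ae_ne 0)] with x hx
  rw [enorm_inv (norm_ne_zero_iff.mpr hx), enorm_norm]

theorem lintegral_closedBall_inv_enorm_sub_le {R : ℝ} {z : E} (hz : ‖z‖ ≤ R) (r : ℝ) :
    ∫⁻ x in closedBall 0 r, ‖z - x‖ₑ⁻¹ ∂ν ≤ ∫⁻ x in closedBall 0 (R + r), ‖x‖ₑ⁻¹ ∂ν := by
  rw [← lintegral_indicator measurableSet_closedBall,
    ← lintegral_indicator measurableSet_closedBall,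
    ← lintegral_sub_left_eq_self ((closedBall 0 (R + r)).indicator fun x => ‖x‖ₑ⁻¹) z]
  refine lintegral_mono fun x => ?_
  by_cases hx : x ∈ closedBall 0 r
  · have : z - x ∈ closedBall 0 (R + r) := by
      rw [mem_closedBall_zero_iff] at hx ⊢
      exact (norm_sub_le z x).trans (add_le_add hz hx)
    simp [indicator_of_mem hx, indicator_of_mem this]
  · simp [indicator_of_notMem hx]

variable {T : Type*} [MeasurableSpace T] {μ : Measure T}

theorem aemeasurable_prod_div_enorm_sub {w : T → ℝ≥0∞} {g : T → E} (hw : AEMeasurable w μ)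
    (hg : AEMeasurable g μ) (ρ : Measure E) :
    AEMeasurable (fun p : E × T => w p.2 / ‖g p.2 - p.1‖ₑ) (ρ.prod μ) :=
  hw.comp_snd.div (hg.comp_snd.sub measurable_fst.aemeasurable).enorm

theorem lintegral_closedBall_lintegral_div_enorm_sub_le [SFinite μ] {w : T → ℝ≥0∞} {g : T → E}
    (hw : AEMeasurable w μ) (hg : AEMeasurable g μ) {R : ℝ} (hgR : ∀ᵐ t ∂μ, ‖g t‖ ≤ R) (r : ℝ) :
    ∫⁻ x in closedBall 0 r, ∫⁻ t, w t / ‖g t - x‖ₑ ∂μ ∂ν ≤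
      (∫⁻ t, w t ∂μ) * ∫⁻ x in closedBall 0 (R + r), ‖x‖ₑ⁻¹ ∂ν := by
  calc ∫⁻ x in closedBall 0 r, ∫⁻ t, w t / ‖g t - x‖ₑ ∂μ ∂ν
      = ∫⁻ t, w t * ∫⁻ x in closedBall 0 r, ‖g t - x‖ₑ⁻¹ ∂ν ∂μ := by
        rw [lintegral_lintegral_swap (aemeasurable_prod_div_enorm_sub hw hg _)]
        exact lintegral_congr fun t => lintegral_const_mul _ (by fun_prop)
    _ ≤ ∫⁻ t, w t * ∫⁻ x in closedBall 0 (R + r), ‖x‖ₑ⁻¹ ∂ν ∂μ := by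
        refine lintegral_mono_ae (hgR.mono fun t ht => ?_)
        exact mul_le_mul_right (lintegral_closedBall_inv_enorm_sub_le ht r) _
    _ = (∫⁻ t, w t ∂μ) * ∫⁻ x in closedBall 0 (R + r), ‖x‖ₑ⁻¹ ∂ν := lintegral_mul_const'' _ hw

theorem ae_tsum_lintegral_div_enorm_sub_lt_top [SFinite μ] (hE : 2 ≤ Module.finrank ℝ E)
    {ι : Type*} [Countable ι] {w : ι → T → ℝ≥0∞} {g : ι → T → E} (hw : ∀ j, AEMeasurable (w j) μ)
    (hg : ∀ j, AEMeasurable (g j) μ) {R : ℝ} (hgR : ∀ j, ∀ᵐ t ∂μ, ‖g j t‖ ≤ R)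
    (hmass : ∑' j, ∫⁻ t, w j t ∂μ < ∞) :
    ∀ᵐ x ∂ν, ∑' j, ∫⁻ t, w j t / ‖g j t - x‖ₑ ∂μ < ∞ := by
  suffices h : ∀ n : ℕ, ∀ᵐ x ∂ν.restrict (closedBall 0 n),
      ∑' j, ∫⁻ t, w j t / ‖g j t - x‖ₑ ∂μ < ∞ by
    rwa [← ae_restrict_iUnion_iff, iUnion_closedBall_nat, Measure.restrict_univ] at h
  intro n
  have hmeas : ∀ j, AEMeasurable (fun x => ∫⁻ t, w j t / ‖g j t - x‖ₑ ∂μ)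
      (ν.restrict (closedBall 0 n)) := fun j =>
    (aemeasurable_prod_div_enorm_sub (hw j) (hg j) _).lintegral_prod_right'
  refine ae_lt_top' (AEMeasurable.tsum hmeas) (ne_of_lt ?_)
  calc ∫⁻ x in closedBall 0 n, ∑' j, ∫⁻ t, w j t / ‖g j t - x‖ₑ ∂μ ∂ν
      = ∑' j, ∫⁻ x in closedBall 0 n, ∫⁻ t, w j t / ‖g j t - x‖ₑ ∂μ ∂ν := lintegral_tsum hmeas
    _ ≤ ∑' j, (∫⁻ t, w j t ∂μ) * ∫⁻ x in closedBall 0 (R + n), ‖x‖ₑ⁻¹ ∂ν :=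
        ENNReal.tsum_le_tsum fun j =>
          lintegral_closedBall_lintegral_div_enorm_sub_le (hw j) (hg j) (hgR j) n
    _ = (∑' j, ∫⁻ t, w j t ∂μ) * ∫⁻ x in closedBall 0 (R + n), ‖x‖ₑ⁻¹ ∂ν := ENNReal.tsum_mul_right
    _ < ∞ := ENNReal.mul_lt_top hmass (lintegral_closedBall_inv_enorm_lt_top hE _)

end MeasureTheory

theorem cauchy_transform_finite_ae_general (n : ℕ) (hn : 0 < n)
    (γ : ℕ → ℝ → EuclideanSpace ℂ (Fin n)) (θ : ℕ → ℝ → ℝ)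
    (hγ : ∀ j, ContDiffOn ℝ 1 (γ j) (Ioo (0 : ℝ) 1))
    (hθ : ∀ j, AEMeasurable (θ j) (volume.restrict (Ioo (0 : ℝ) 1)))
    (R : ℝ)
    (hbdd : ∀ j, ∀ t ∈ Ioo (0 : ℝ) 1, ‖γ j t ⟨0, hn⟩‖ < R)
    (hmass : ∑' j, ∫⁻ t in Ioo (0 : ℝ) 1,
        ENNReal.ofReal (|θ j t| * ‖deriv (fun s => γ j s ⟨0, hn⟩) t‖) < ∞) :
    ∀ᵐ α : ℂ, ∑' j, ∫⁻ t in Ioo (0 : ℝ) 1,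
        ENNReal.ofReal (|θ j t| * ‖deriv (fun s => γ j s ⟨0, hn⟩) t‖) /
          ENNReal.ofReal ‖γ j t ⟨0, hn⟩ - α‖ < ∞ := by
  have hweight : ∀ j, AEMeasurable
      (fun t => ENNReal.ofReal (|θ j t| * ‖deriv (fun s => γ j s ⟨0, hn⟩) t‖))
      (volume.restrict (Ioo (0 : ℝ) 1)) := fun j =>
    ((hθ j).abs.mul (measurable_deriv _).norm.aemeasurable).ennreal_ofReal
  have hcoord : ∀ j, AEMeasurable (fun t => γ j t ⟨0, hn⟩) (volume.restrict (Ioo (0 : ℝ) 1)) :=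
    fun j => ((EuclideanSpace.proj (𝕜 := ℂ) (⟨0, hn⟩ : Fin n)).continuous.comp_continuousOn
      (hγ j).continuousOn).aemeasurable measurableSet_Ioo
  have hcoord_le : ∀ j, ∀ᵐ t ∂volume.restrict (Ioo (0 : ℝ) 1), ‖γ j t ⟨0, hn⟩‖ ≤ R := fun j =>
    (ae_restrict_mem measurableSet_Ioo).mono fun t ht => (hbdd j t ht).le
  simpa only [ofReal_norm] using ae_tsum_lintegral_div_enorm_sub_lt_top
    (by rw [Complex.finrank_real_complex]) hweight hcoord hcoord_le hmass

/-- Finiteness of the Cauchy transform (the paper's Lemma 2.11), stated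
parametrically for countably many weighted `C¹` curves in `ℂⁿ`. -/
theorem cauchy_transform_finite_ae (n : ℕ) (hn : 0 < n)
    (γ : ℕ → ℝ → EuclideanSpace ℂ (Fin n)) (θ : ℕ → ℝ → ℝ)
    (hγ : ∀ j, ContDiffOn ℝ 1 (γ j) (Ioo (0 : ℝ) 1))
    (hθ : ∀ j, AEMeasurable (θ j) (volume.restrict (Ioo (0 : ℝ) 1)))
    (R : ℝ) (hR : 0 < R)
    (hbdd : ∀ j, ∀ t ∈ Ioo (0 : ℝ) 1, ‖γ j t ⟨0, hn⟩‖ < R)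
    (hmass : ∑' j, ∫⁻ t in Ioo (0 : ℝ) 1,
        ENNReal.ofReal (|θ j t| * ‖deriv (fun s => γ j s ⟨0, hn⟩) t‖) < ∞) :
    ∀ᵐ α : ℂ, ∑' j, ∫⁻ t in Ioo (0 : ℝ) 1,
        ENNReal.ofReal (|θ j t| * ‖deriv (fun s => γ j s ⟨0, hn⟩) t‖) /
          ENNReal.ofReal ‖γ j t ⟨0, hn⟩ - α‖ < ∞ :=
  cauchy_transform_finite_ae_general n hn γ θ hγ hθ R hbdd hmass
end

section
/- Let n ≥ 1, let γ : ℝ → ℂ^n be continuously differentiable on the open interval (0,1) (ContDiffOn ℝ 1 γ (Ioo 0 1)) and injective on (0,1), and let θ : ℂ^n → ℝ be a Borel function. Then ∫⁻_{t ∈ (0,1)} |θ(γ(t))| · ‖deriv (t ↦ (γ(t))₁) t‖ dt ≤ ∫⁻_{γ((0,1))} |θ(x)| dμH^1(x), where (·)₁ denotes the first complex coordinate and the right-hand side is the lower integral of |θ| over the image γ((0,1)) with respect to the 1-dimensional Hausdorff measure on ℂ^n. -/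
/-!
Where `γ'` stays within `ε` of a vector `v` on an interval, the mean value inequality gives
`‖γ u - γ w‖ ≥ (‖v‖ - ε) |u - w|`, so `H¹(γ A) ≥ (‖v‖ - ε) |A|` while `∫_A ‖γ'‖ ≤ (‖v‖ + ε) |A|`.
Cutting a set `s ⊆ (0,1)` into countably many such pieces, whose images are disjoint and Borel
by injectivity and Lusin–Souslin, and letting `ε → 0` gives `∫_s ‖γ'‖ ≤ H¹(γ s)`: the
push-forward of `‖γ'‖ dt` under `γ` is dominated by `H¹` on `γ (0,1)`. Finally `|γ₁'| ≤ ‖γ'‖`.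
-/

open MeasureTheory Set Function
open scoped ENNReal NNReal

lemma ofReal_mul_volume_le_hausdorffMeasure_image {X : Type*} [MetricSpace X]
    [MeasurableSpace X] [BorelSpace X] {f : ℝ → X} {A : Set ℝ} {c : ℝ}
    (hf : ∀ u ∈ A, ∀ v ∈ A, c * dist u v ≤ dist (f u) (f v)) :
    ENNReal.ofReal c * volume A ≤ μH[1] (f '' A) := by
  rcases le_or_gt c 0 with hc | hc
  · simp [ENNReal.ofReal_of_nonpos hc]
  have hanti : AntilipschitzWith (Real.toNNReal c)⁻¹ (f ∘ ((↑) : A → ℝ)) :=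
    AntilipschitzWith.of_le_mul_dist fun u v => by
      rw [NNReal.coe_inv, Real.coe_toNNReal _ hc.le, inv_mul_eq_div, le_div_iff₀' hc]
      exact hf u u.2 v v.2
  have h := hanti.le_hausdorffMeasure_image zero_le_one univ
  rw [← isometry_subtype_coe.hausdorffMeasure_image (Or.inl zero_le_one), image_univ,
    Subtype.range_coe, hausdorffMeasure_real, image_univ, range_comp, Subtype.range_coe,
    ENNReal.rpow_one] at h
  calc ENNReal.ofReal c * volume A
      ≤ ENNReal.ofReal c * (((Real.toNNReal c)⁻¹ : ℝ≥0) * μH[1] (f '' A)) := by gcongr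
    _ = μH[1] (f '' A) := by
      rw [← mul_assoc, ENNReal.coe_inv (by simpa using hc), ENNReal.ofReal,
        ENNReal.mul_inv_cancel (by simpa using hc) ENNReal.coe_ne_top, one_mul]

lemma IsOpen.exists_seq_convex_cover_norm_sub_le {E : Type*} [NormedAddCommGroup E]
    {g : ℝ → E} {U : Set ℝ} (hU : IsOpen U) (hg : ContinuousOn g U) {ε : ℝ} (hε : 0 < ε) :
    ∃ (B : ℕ → Set ℝ) (v : ℕ → E), (∀ n, IsOpen (B n) ∧ Convex ℝ (B n) ∧ B n ⊆ U) ∧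
      (∀ n, ∀ x ∈ B n, ‖g x - v n‖ ≤ ε) ∧ U ⊆ ⋃ n, B n := by
  have hball : ∀ t, ∃ r, (t ∈ U → 0 < r) ∧ Metric.ball t r ⊆ U ∧
      ∀ x ∈ Metric.ball t r, ‖g x - g t‖ ≤ ε := by
    intro t
    by_cases ht : t ∈ U
    · obtain ⟨r₁, hr₁, hg₁⟩ :=
        Metric.continuousAt_iff.1 (hg.continuousAt (hU.mem_nhds ht)) ε hε
      obtain ⟨r₂, hr₂, hU₂⟩ := Metric.isOpen_iff.1 hU t ht
      refine ⟨min r₁ r₂, fun _ => lt_min hr₁ hr₂,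
        (Metric.ball_subset_ball (min_le_right _ _)).trans hU₂, fun x hx => ?_⟩
      rw [← dist_eq_norm]
      exact (hg₁ (lt_of_lt_of_le hx (min_le_left _ _))).le
    · exact ⟨0, fun h => absurd h ht, by simp, by simp⟩
  choose r hr_pos hr_sub hr_osc using hball
  obtain ⟨t, ht⟩ := (HereditarilyLindelofSpace.isLindelof U).indexed_countable_subcover
    (fun t => Metric.ball t (r t)) (fun _ => Metric.isOpen_ball)
    (fun x hx => mem_iUnion.2 ⟨x, Metric.mem_ball_self (hr_pos x hx)⟩)
  exact ⟨fun n => Metric.ball (t n) (r (t n)), fun n => g (t n),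
    fun n => ⟨Metric.isOpen_ball, convex_ball _ _, hr_sub _⟩, fun n => hr_osc _, ht⟩

section Curve

variable {E : Type*} [NormedAddCommGroup E] [NormedSpace ℝ E] {γ g : ℝ → E}

lemma Convex.sub_mul_dist_le_dist_of_norm_deriv_sub_le {B : Set ℝ} (hB : Convex ℝ B)
    (hd : ∀ x ∈ B, HasDerivAt γ (g x) x) {v : E} {ε : ℝ} (hosc : ∀ x ∈ B, ‖g x - v‖ ≤ ε)
    {u w : ℝ} (hu : u ∈ B) (hw : w ∈ B) :
    (‖v‖ - ε) * dist u w ≤ dist (γ u) (γ w) := by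
  have hmv : ‖(γ u - u • v) - (γ w - w • v)‖ ≤ ε * ‖u - w‖ :=
    hB.norm_image_sub_le_of_norm_hasDerivWithin_le
      (fun x hx => ((hd x hx).sub ((hasDerivAt_id x).smul_const v)).hasDerivWithinAt)
      (by simpa using hosc) hw hu
  have htri := norm_le_norm_add_norm_sub' ((u - w) • v) (γ u - γ w)
  rw [← sub_sub_sub_comm, ← sub_smul, norm_sub_rev] at hmv
  rw [norm_smul, Real.norm_eq_abs] at htri
  rw [dist_eq_norm, dist_eq_norm, Real.norm_eq_abs] at *
  nlinarith

variable [MeasurableSpace E] [BorelSpace E]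

lemma Convex.setLIntegral_norm_deriv_le_hausdorffMeasure_image_add {B : Set ℝ}
    (hB : Convex ℝ B) (hd : ∀ x ∈ B, HasDerivAt γ (g x) x) {v : E} {ε : ℝ}
    (hosc : ∀ x ∈ B, ‖g x - v‖ ≤ ε) {A : Set ℝ} (hAB : A ⊆ B) :
    ∫⁻ x in A, ENNReal.ofReal ‖g x‖ ≤ μH[1] (γ '' A) + ENNReal.ofReal (2 * ε) * volume A := by
  have hbound : ∀ x ∈ A, ENNReal.ofReal ‖g x‖ ≤ ENNReal.ofReal (‖v‖ - ε + 2 * ε) :=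
    fun x hx => ENNReal.ofReal_le_ofReal <|
      (norm_le_norm_add_norm_sub' (g x) v).trans (by linarith [hosc x (hAB hx)])
  have hlower : ENNReal.ofReal (‖v‖ - ε) * volume A ≤ μH[1] (γ '' A) :=
    ofReal_mul_volume_le_hausdorffMeasure_image fun u hu w hw =>
      hB.sub_mul_dist_le_dist_of_norm_deriv_sub_le hd hosc (hAB hu) (hAB hw)
  calc ∫⁻ x in A, ENNReal.ofReal ‖g x‖
      ≤ ∫⁻ _ in A, ENNReal.ofReal (‖v‖ - ε + 2 * ε) := setLIntegral_mono measurable_const hbound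
    _ ≤ (ENNReal.ofReal (‖v‖ - ε) + ENNReal.ofReal (2 * ε)) * volume A := by
      rw [setLIntegral_const]; gcongr; exact ENNReal.ofReal_add_le
    _ ≤ μH[1] (γ '' A) + ENNReal.ofReal (2 * ε) * volume A := by
      rw [add_mul]; gcongr

variable {U : Set ℝ} (hU : IsOpen U) (hd : ∀ x ∈ U, HasDerivAt γ (g x) x)
  (hg : ContinuousOn g U) (hinj : InjOn γ U)
include hU hd hg hinj

lemma setLIntegral_norm_deriv_le_hausdorffMeasure_image_add {s : Set ℝ} (hs : MeasurableSet s)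
    (hsU : s ⊆ U) {ε : ℝ} (hε : 0 < ε) :
    ∫⁻ x in s, ENNReal.ofReal ‖g x‖ ≤ μH[1] (γ '' s) + ENNReal.ofReal (2 * ε) * volume s := by
  obtain ⟨B, v, hB, hosc, hUB⟩ := hU.exists_seq_convex_cover_norm_sub_le hg hε
  set A : ℕ → Set ℝ := fun n => s ∩ disjointed B n
  have hAB : ∀ n, A n ⊆ B n := fun n => inter_subset_right.trans (disjointed_le B n)
  have hAU : ∀ n, A n ⊆ U := fun n => (hAB n).trans (hB n).2.2
  have hAm : ∀ n, MeasurableSet (A n) :=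
    fun n => hs.inter (MeasurableSet.disjointed (fun k => (hB k).1.measurableSet) n)
  have hA_disj : Pairwise (Disjoint on A) := fun m n hmn =>
    (disjoint_disjointed B hmn).mono inter_subset_right inter_subset_right
  have hsA : s = ⋃ n, A n := by
    rw [← inter_iUnion, iUnion_disjointed, inter_eq_left.2 (hsU.trans hUB)]
  have hγA_disj : Pairwise (Disjoint on fun n => γ '' A n) := fun m n hmn => by
    rw [onFun, disjoint_iff_inter_eq_empty, ← hinj.image_inter (hAU m) (hAU n),
      (hA_disj hmn).inter_eq, image_empty]
  have hγAm : ∀ n, MeasurableSet (γ '' A n) := fun n =>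
    (hAm n).image_of_continuousOn_injOn
      (fun x hx => (hd x (hAU n hx)).continuousAt.continuousWithinAt) (hinj.mono (hAU n))
  calc ∫⁻ x in s, ENNReal.ofReal ‖g x‖
      = ∑' n, ∫⁻ x in A n, ENNReal.ofReal ‖g x‖ := by
        conv_lhs => rw [hsA]
        exact lintegral_iUnion hAm hA_disj _
    _ ≤ ∑' n, (μH[1] (γ '' A n) + ENNReal.ofReal (2 * ε) * volume (A n)) :=
        ENNReal.tsum_le_tsum fun n =>
          (hB n).2.1.setLIntegral_norm_deriv_le_hausdorffMeasure_image_add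
            (fun x hx => hd x ((hB n).2.2 hx)) (hosc n) (hAB n)
    _ = μH[1] (γ '' s) + ENNReal.ofReal (2 * ε) * volume s := by
        rw [ENNReal.tsum_add, ENNReal.tsum_mul_left, ← measure_iUnion hγA_disj hγAm,
          ← measure_iUnion hA_disj hAm, ← image_iUnion, ← hsA]

lemma setLIntegral_norm_deriv_le_hausdorffMeasure_image {s : Set ℝ} (hs : MeasurableSet s)
    (hsU : s ⊆ U) (hs_fin : volume s ≠ ∞) :
    ∫⁻ x in s, ENNReal.ofReal ‖g x‖ ≤ μH[1] (γ '' s) := by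
  refine ENNReal.le_of_forall_pos_le_add fun δ hδ _ => ?_
  set V := (volume s).toReal
  have hε : 0 < (δ : ℝ) / (2 * (V + 1)) := by positivity
  refine (setLIntegral_norm_deriv_le_hausdorffMeasure_image_add hU hd hg hinj hs hsU hε).trans ?_
  gcongr
  rw [← ENNReal.ofReal_toReal hs_fin, ← ENNReal.ofReal_mul (by positivity),
    ← ENNReal.ofReal_coe_nnreal]
  refine ENNReal.ofReal_le_ofReal ?_
  rw [mul_div_assoc', mul_div_mul_left _ _ two_ne_zero, div_mul_eq_mul_div,
    div_le_iff₀ (by positivity)]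
  nlinarith [δ.2, ENNReal.toReal_nonneg (a := volume s)]

theorem setLIntegral_comp_mul_norm_deriv_le (hU_fin : volume U ≠ ∞) {f : E → ℝ≥0∞}
    (hf : Measurable f) :
    ∫⁻ x in U, f (γ x) * ENNReal.ofReal ‖g x‖ ≤ ∫⁻ y in γ '' U, f y ∂μH[1] := by
  classical
  have hγ : ContinuousOn γ U := fun x hx => (hd x hx).continuousAt.continuousWithinAt
  have hγ_ae : AEMeasurable γ (volume.restrict U) := hγ.aemeasurable hU.measurableSet
  set μ := (volume.restrict U).withDensity fun x => ENNReal.ofReal ‖g x‖ with hμ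
  have hγ_ae' : AEMeasurable γ μ := hγ_ae.mono_ac (withDensity_absolutelyContinuous _ _)
  -- `γ` need not be measurable off `U`; gluing it to `0` there shows `U ∩ γ ⁻¹' B` is measurable.
  have hpre : ∀ B, MeasurableSet B → MeasurableSet (U ∩ γ ⁻¹' B) := fun B hB => by
    simpa [piecewise_preimage, inter_comm U, ite_inter_self] using
      (hγ.measurable_piecewise (continuousOn_const (c := 0)) hU.measurableSet hB).inter
        hU.measurableSet
  have hmap : μ.map γ ≤ μH[1].restrict (γ '' U) := by
    refine Measure.le_iff.2 fun B hB => ?_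
    rw [Measure.map_apply_of_aemeasurable hγ_ae' hB, withDensity_apply' _,
      Measure.restrict_restrict' hU.measurableSet, inter_comm (γ ⁻¹' B),
      Measure.restrict_apply hB, inter_comm B, ← image_inter_preimage]
    exact setLIntegral_norm_deriv_le_hausdorffMeasure_image hU hd hg hinj (hpre B hB)
      inter_subset_left (measure_ne_top_of_subset inter_subset_left hU_fin)
  calc ∫⁻ x in U, f (γ x) * ENNReal.ofReal ‖g x‖ = ∫⁻ x, f (γ x) ∂μ := by
        rw [hμ, lintegral_withDensity_eq_lintegral_mul₀ (g := fun x => f (γ x))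
          (hg.aemeasurable hU.measurableSet).norm.ennreal_ofReal (hf.comp_aemeasurable hγ_ae)]
        simp only [Pi.mul_apply, mul_comm]
    _ = ∫⁻ y, f y ∂(μ.map γ) := (lintegral_map' hf.aemeasurable hγ_ae').symm
    _ ≤ ∫⁻ y in γ '' U, f y ∂μH[1] := lintegral_mono' hmap le_rfl

end Curve

lemma norm_deriv_apply_le {𝕜 ι : Type*} [RCLike 𝕜] [Fintype ι] {γ : ℝ → EuclideanSpace 𝕜 ι}
    {t : ℝ} (h : DifferentiableAt ℝ γ t) (i : ι) :
    ‖deriv (fun s => γ s i) t‖ ≤ ‖deriv γ t‖ := by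
  have hi : HasDerivAt (fun s => γ s i) (deriv γ t i) t :=
    ((EuclideanSpace.proj (𝕜 := 𝕜) i).restrictScalars ℝ).hasFDerivAt.comp_hasDerivAt t
      h.hasDerivAt
  rw [hi.deriv]
  exact PiLp.norm_apply_le _ i

/-- The paper's Proposition 2.9: for a `C¹`-embedded curve `γ` with weight `θ`,
`∫_γ |θ| |dz₁| ≤ M(γ ∧ θ) = ∫_γ |θ| dH¹`. -/
theorem weighted_first_coordinate_length_le_mass (n : ℕ) (hn : 0 < n)
    [MeasurableSpace (EuclideanSpace ℂ (Fin n))]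
    [BorelSpace (EuclideanSpace ℂ (Fin n))]
    (γ : ℝ → EuclideanSpace ℂ (Fin n))
    (hγ : ContDiffOn ℝ 1 γ (Ioo (0 : ℝ) 1))
    (hinj : InjOn γ (Ioo (0 : ℝ) 1))
    (θ : EuclideanSpace ℂ (Fin n) → ℝ) (hθ : Measurable θ) :
    ∫⁻ t in Ioo (0 : ℝ) 1,
        ENNReal.ofReal (|θ (γ t)| * ‖deriv (fun s => γ s ⟨0, hn⟩) t‖) ≤
      ∫⁻ x in γ '' (Ioo (0 : ℝ) 1), ENNReal.ofReal |θ x| ∂μH[1] := by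
  have hd : ∀ t ∈ Ioo (0 : ℝ) 1, HasDerivAt γ (deriv γ t) t := fun t ht =>
    ((hγ.differentiableOn one_ne_zero).differentiableAt (isOpen_Ioo.mem_nhds ht)).hasDerivAt
  calc ∫⁻ t in Ioo (0 : ℝ) 1, ENNReal.ofReal (|θ (γ t)| * ‖deriv (fun s => γ s ⟨0, hn⟩) t‖)
      ≤ ∫⁻ t in Ioo (0 : ℝ) 1, ENNReal.ofReal |θ (γ t)| * ENNReal.ofReal ‖deriv γ t‖ :=
        setLIntegral_mono' measurableSet_Ioo fun t ht => by
          rw [← ENNReal.ofReal_mul (abs_nonneg _)]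
          gcongr
          exact norm_deriv_apply_le (hd t ht).differentiableAt _
    _ ≤ ∫⁻ x in γ '' (Ioo (0 : ℝ) 1), ENNReal.ofReal |θ x| ∂μH[1] :=
        setLIntegral_comp_mul_norm_deriv_le isOpen_Ioo hd
          (hγ.continuousOn_deriv_of_isOpen isOpen_Ioo le_rfl) hinj (by simp)
          hθ.abs.ennreal_ofReal
end

section
/- Let N, k be natural numbers, let μ be a locally finite Borel measure on ℝ^N, and let c > 0. Let A = {a ∈ ℝ^N | limsup_{r → 0⁺} μ(closedBall(a, r)) / r^k ≥ c}, where the limsup is taken along the filter of positive radii tending to 0. Then for every compact set K ⊆ ℝ^N, μH^k(A ∩ K) < ∞; that is, the set of points of positive k-dimensional upper density at level c has locally finite k-dimensional Hausdorff measure. -/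
open MeasureTheory Set Filter Metric
open scoped ENNReal Topology

/-! Federer 2.10.19(3). Suppose every point `a` of `S` is the centre of arbitrarily small balls
`B(a, r)` with `d r ^ k ≤ μ B(a, r)`, and fix a scale `ρ > 0`. The Vitali covering lemma extracts
from these balls with `r ≤ ρ` a disjoint subfamily whose fourfold enlargements still cover `S`.
The enlargements have diameter at most `8 r`, so
`∑ diam ^ k ≤ 8 ^ k ∑ r ^ k ≤ 8 ^ k μ(cthickening ρ S) / d`; when the right side is finite, the same
bound forces the disjoint family to be countable. Letting `ρ → 0` bounds `d μH[k] S`. For `A ∩ K`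
take `d = c / 2 < c`; the closed `1`-thickening of the compact set `K` has finite `μ`-measure. -/

universe u

section PseudoMetric

variable {X : Type*} [PseudoMetricSpace X]

theorem ediam_closedBall_le_ofReal (x : X) (r : ℝ) :
    ediam (closedBall x r) ≤ ENNReal.ofReal (2 * r) :=
  ediam_le_of_forall_dist_le fun y hy z hz => by
    linarith [dist_triangle_right y z x, mem_closedBall.1 hy, mem_closedBall.1 hz]

variable [MeasurableSpace X]

theorem frequently_le_measure_closedBall_of_lt_limsup {μ : Measure X} {a : X} {k : ℕ}
    {d : ℝ≥0∞}
    (h : d < limsup (fun r : ℝ => μ (closedBall a r) / ENNReal.ofReal (r ^ k)) (𝓝[>] 0)) :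
    ∃ᶠ r in 𝓝[>] (0 : ℝ), d * ENNReal.ofReal (r ^ k) ≤ μ (closedBall a r) := by
  refine ((frequently_lt_of_lt_limsup (by isBoundedDefault) h).and_eventually
    self_mem_nhdsWithin).mono fun r ⟨hr, hr0⟩ => ?_
  have hrk : ENNReal.ofReal (r ^ k) ≠ 0 := (ENNReal.ofReal_pos.2 (pow_pos hr0 k)).ne'
  exact (ENNReal.le_div_iff_mul_le (Or.inl hrk) (Or.inl ENNReal.ofReal_ne_top)).1 hr.le

theorem exists_countable_closedBall_cover_tsum_le [OpensMeasurableSpace X] (μ : Measure X)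
    (k : ℕ) {d : ℝ≥0∞} (hd : d ≠ 0) {S : Set X}
    (hS : ∀ a ∈ S, ∃ᶠ r in 𝓝[>] (0 : ℝ), d * ENNReal.ofReal (r ^ k) ≤ μ (closedBall a r))
    {ρ : ℝ} (hρ : 0 < ρ) (hμ : μ (cthickening ρ S) ≠ ∞) :
    ∃ u : Set (X × ℝ), u.Countable ∧ (∀ p ∈ u, 0 < p.2 ∧ p.2 ≤ ρ) ∧
      S ⊆ ⋃ p ∈ u, closedBall p.1 (4 * p.2) ∧
      d * ∑' p : u, ENNReal.ofReal (p.1.2 ^ k) ≤ μ (cthickening ρ S) := by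
  set t : Set (X × ℝ) :=
    {p | p.1 ∈ S ∧ 0 < p.2 ∧ p.2 ≤ ρ ∧ d * ENNReal.ofReal (p.2 ^ k) ≤ μ (closedBall p.1 p.2)}
  obtain ⟨u, hut, hdisj, hcov⟩ := Vitali.exists_disjoint_subfamily_covering_enlargement_closedBall
    t Prod.fst Prod.snd ρ (fun p hp => hp.2.2.1) 4 (by norm_num)
  have hsum : d * ∑' p : u, ENNReal.ofReal (p.1.2 ^ k) ≤ μ (cthickening ρ S) := calc
    _ = ∑' p : u, d * ENNReal.ofReal (p.1.2 ^ k) := ENNReal.tsum_mul_left.symm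
    _ ≤ ∑' p : u, μ (closedBall p.1.1 p.1.2) := ENNReal.tsum_le_tsum fun p => (hut p.2).2.2.2
    _ ≤ μ (⋃ p : u, closedBall p.1.1 p.1.2) :=
      tsum_meas_le_meas_iUnion_of_disjoint μ (fun _ => measurableSet_closedBall)
        fun p q hpq => hdisj p.2 q.2 (Subtype.coe_injective.ne hpq)
    _ ≤ μ (cthickening ρ S) := measure_mono <| iUnion_subset fun p =>
      (closedBall_subset_cthickening (hut p.2).1 _).trans (cthickening_mono (hut p.2).2.2.1 _)
  refine ⟨u, ?_, fun p hp => ⟨(hut hp).2.1, (hut hp).2.2.1⟩, fun a ha => ?_, hsum⟩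
  · have hsupp := Summable.countable_support_ennreal
      (f := fun p : u => d * ENNReal.ofReal (p.1.2 ^ k))
      (by rw [ENNReal.tsum_mul_left]; exact ne_top_of_le_ne_top hμ hsum)
    rw [Function.support_eq_univ fun p => mul_ne_zero hd
      (ENNReal.ofReal_pos.2 (pow_pos (hut p.2).2.1 k)).ne', countable_univ_iff] at hsupp
    exact countable_coe_iff.1 hsupp
  · obtain ⟨r, hr, hr0, hrρ⟩ := ((hS a ha).and_eventually (Ioo_mem_nhdsGT hρ)).exists
    obtain ⟨p, hp, hsub⟩ := hcov (a, r) ⟨ha, hr0, hrρ.le, hr⟩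
    exact mem_iUnion₂.2 ⟨p, hp, hsub (mem_closedBall_self hr0.le)⟩

end PseudoMetric

theorem hausdorffMeasure_le_of_forall_countable_cover {X : Type u} [EMetricSpace X]
    [MeasurableSpace X] [BorelSpace X] (d : ℝ) {s : Set X} {B : ℝ≥0∞}
    (h : ∀ ε : ℝ, 0 < ε → ∃ (ι : Type u) (_ : Countable ι) (t : ι → Set X),
      s ⊆ ⋃ i, t i ∧ (∀ i, ediam (t i) ≤ ENNReal.ofReal ε) ∧ ∑' i, ediam (t i) ^ d ≤ B) :
    μH[d] s ≤ B := by
  choose ι hι t hcov hdiam hsum using fun n : ℕ => h (1 / (n + 1)) (by positivity)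
  have hr : Tendsto (fun n : ℕ => ENNReal.ofReal (1 / (n + 1))) atTop (𝓝 0) :=
    ENNReal.ofReal_zero ▸ ENNReal.tendsto_ofReal tendsto_one_div_add_atTop_nhds_zero_nat
  calc μH[d] s ≤ liminf (fun n => ∑' i, ediam (t n i) ^ d) atTop :=
        Measure.hausdorffMeasure_le_liminf_tsum d s _ hr t (.of_forall hdiam) (.of_forall hcov)
    _ ≤ B := liminf_le_of_frequently_le' (.of_forall hsum)

theorem hausdorffMeasure_le_of_frequently_le_measure_closedBall {X : Type u} [MetricSpace X]
    [MeasurableSpace X] [BorelSpace X] (μ : Measure X) (k : ℕ) {d : ℝ≥0∞} (hd : d ≠ 0)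
    {S : Set X}
    (hS : ∀ a ∈ S, ∃ᶠ r in 𝓝[>] (0 : ℝ), d * ENNReal.ofReal (r ^ k) ≤ μ (closedBall a r))
    {δ : ℝ} (hδ : 0 < δ) :
    d * μH[k] S ≤ 8 ^ k * μ (cthickening δ S) := by
  by_cases hμ : μ (cthickening δ S) = ∞
  · simp [hμ, ENNReal.mul_top (pow_ne_zero k (by norm_num : (8 : ℝ≥0∞) ≠ 0))]
  refine le_trans (mul_le_mul_right (hausdorffMeasure_le_of_forall_countable_cover _
    fun ε hε => ?_) d) ENNReal.mul_div_le
  set ρ := min (ε / 8) δ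
  have hρ : 0 < ρ := lt_min (by positivity) hδ
  have hμρ : μ (cthickening ρ S) ≤ μ (cthickening δ S) :=
    measure_mono (cthickening_mono (min_le_right _ _) S)
  obtain ⟨u, hu, hur, hcov, hsum⟩ :=
    exists_countable_closedBall_cover_tsum_le μ k hd hS hρ (ne_top_of_le_ne_top hμ hμρ)
  refine ⟨u, hu.to_subtype, fun p => closedBall p.1.1 (4 * p.1.2), by rwa [iUnion_subtype],
    fun p => ?_, ?_⟩
  · refine (ediam_closedBall_le_ofReal _ _).trans (ENNReal.ofReal_le_ofReal ?_)
    linarith [(hur p.1 p.2).2, min_le_left (ε / 8) δ]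
  have hdiam (p : u) : ediam (closedBall p.1.1 (4 * p.1.2)) ^ (k : ℝ) ≤
      8 ^ k * ENNReal.ofReal (p.1.2 ^ k) := by
    have hr := (hur p.1 p.2).1.le
    calc ediam (closedBall p.1.1 (4 * p.1.2)) ^ (k : ℝ)
        ≤ ENNReal.ofReal (2 * (4 * p.1.2)) ^ k := by
          rw [ENNReal.rpow_natCast]; gcongr; exact ediam_closedBall_le_ofReal _ _
      _ = 8 ^ k * ENNReal.ofReal (p.1.2 ^ k) := by
          rw [← mul_assoc, ENNReal.ofReal_mul (by norm_num), ENNReal.ofReal_pow hr, mul_pow]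
          norm_num
  calc ∑' p : u, ediam (closedBall p.1.1 (4 * p.1.2)) ^ (k : ℝ)
      ≤ 8 ^ k * ∑' p : u, ENNReal.ofReal (p.1.2 ^ k) := by
        rw [← ENNReal.tsum_mul_left]; exact ENNReal.tsum_le_tsum hdiam
    _ ≤ 8 ^ k * (μ (cthickening δ S) / d) := by
        gcongr
        rw [ENNReal.le_div_iff_mul_le (Or.inl hd) (Or.inr hμ), mul_comm]
        exact hsum.trans hμρ
    _ = 8 ^ k * μ (cthickening δ S) / d := (mul_div_assoc _ _ _).symm

/-- Points of positive `k`-dimensional upper density (at a fixed level `c > 0`)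
of a locally finite Borel measure form a set of locally finite `k`-dimensional
Hausdorff measure. -/
theorem upper_density_set_locally_finite_hausdorff (N k : ℕ)
    (μ : Measure (EuclideanSpace ℝ (Fin N))) [IsLocallyFiniteMeasure μ]
    (c : ℝ) (hc : 0 < c)
    (A : Set (EuclideanSpace ℝ (Fin N)))
    (hA : A = {a | ENNReal.ofReal c ≤ limsup
        (fun r : ℝ => μ (Metric.closedBall a r) / ENNReal.ofReal (r ^ k))
        (𝓝[>] (0 : ℝ))})
    (K : Set (EuclideanSpace ℝ (Fin N))) (hK : IsCompact K) :
    μH[(k : ℝ)] (A ∩ K) < ∞ := by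
  have hd : ENNReal.ofReal (c / 2) ≠ 0 := (ENNReal.ofReal_pos.2 (half_pos hc)).ne'
  have hdensity : ∀ a ∈ A ∩ K, ∃ᶠ r in 𝓝[>] (0 : ℝ),
      ENNReal.ofReal (c / 2) * ENNReal.ofReal (r ^ k) ≤ μ (closedBall a r) := by
    rintro a ⟨haA, -⟩
    rw [hA] at haA
    exact frequently_le_measure_closedBall_of_lt_limsup <|
      ((ENNReal.ofReal_lt_ofReal_iff hc).2 (half_lt_self hc)).trans_le haA
  have hfinite : μ (cthickening 1 (A ∩ K)) < ∞ :=
    (measure_mono (cthickening_subset_of_subset 1 inter_subset_right)).trans_lt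
      (hK.cthickening.measure_lt_top)
  have hbound := hausdorffMeasure_le_of_frequently_le_measure_closedBall μ k hd hdensity one_pos
  exact ENNReal.lt_top_of_mul_ne_top_right
    (ne_top_of_le_ne_top (ENNReal.mul_ne_top (by simp) hfinite.ne) hbound) hd
end
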